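/- arXiv:0710.5239 — 3 statements merged into one kernel-verified Lean document; each statement's English description precedes it below -/
import Mathlib

section
/- Let H be a complex Hilbert space and (T i)_{i : ι} a nonempty family of selfadjoint bounded operators on H with 0 ≤ T i ≤ 1 for all i, which is directed in the Loewner order (for all i, j there exists k with T i ≤ T k and T j ≤ T k). Then there exists a selfadjoint bounded operator G with 0 ≤ G ≤ 1 such that for every ψ ∈ H the real number ⟪ψ, G ψ⟫ equals the supremum over i of ⟪ψ, T i ψ⟫, and G is the least upper bound of the family (T i) in the Loewner order on bounded operators: T i ≤ G for all i, and any selfadjoint bounded operator G' with T i ≤ G' for all i satisfies G ≤ G'. -/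
/-!
Vigier's argument. Ordered by the pulled-back Loewner order, the `T i` form a monotone net.
For `i ≤ j` the difference `S = T j - T i` satisfies `0 ≤ S ≤ 1`, so `‖S ψ‖² ≤ ⟪ψ, S ψ⟫`
(write `S = R²` with `R = √S` and use `‖R‖² = ‖S‖ ≤ 1`). The right-hand side is an increment of
the bounded monotone net `⟪ψ, T i ψ⟫`, hence `T i ψ` is Cauchy and converges to some `G ψ`.
The limit `G` is bounded because the `T i` are uniformly bounded, selfadjoint as a strong limit
of selfadjoint operators, and its quadratic form is the supremum of those of the `T i`, which
makes `G` the least upper bound.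
-/

open Filter Topology Set ContinuousLinearMap
open scoped InnerProductSpace

theorem cauchySeq_of_norm_sub_sq_le {ι E : Type*} [Preorder ι] [IsDirected ι (· ≤ ·)]
    [Nonempty ι] [SeminormedAddCommGroup E] {f : ι → E} {q : ι → ℝ}
    (hq : BddAbove (range q)) (hf : ∀ i j, i ≤ j → ‖f j - f i‖ ^ 2 ≤ q j - q i) :
    CauchySeq f := by
  have hmono : Monotone q := fun i j hij => sub_nonneg.mp <| (sq_nonneg _).trans (hf i j hij)
  refine Metric.cauchy_iff.mpr ⟨inferInstance, fun ε hε => ?_⟩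
  obtain ⟨N, hN⟩ := ((tendsto_atTop_ciSup hmono hq).eventually
    (eventually_gt_nhds (sub_lt_self (⨆ i, q i) (pow_pos (half_pos hε) 2)))).exists
  have hclose : ∀ i j, N ≤ i → i ≤ j → ‖f j - f i‖ < ε / 2 := fun i j hNi hij =>
    lt_of_pow_lt_pow_left₀ 2 (half_pos hε).le
      (by linarith [hf i j hij, hmono hNi, le_ciSup hq j])
  refine ⟨f '' Ici N, image_mem_map (mem_atTop N), ?_⟩
  rintro _ ⟨i, hi, rfl⟩ _ ⟨j, hj, rfl⟩
  obtain ⟨k, hik, hjk⟩ := directed_of (· ≤ ·) i j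
  calc dist (f i) (f j) ≤ ‖f k - f i‖ + ‖f k - f j‖ := by
        simpa only [dist_eq_norm'] using dist_triangle_right (f i) (f j) (f k)
    _ < ε / 2 + ε / 2 := add_lt_add (hclose i k hi hik) (hclose j k hj hjk)
    _ = ε := add_halves ε

namespace ContinuousLinearMap

section RCLike

variable {𝕜 E : Type*} [RCLike 𝕜] [NormedAddCommGroup E] [InnerProductSpace 𝕜 E]

theorem re_inner_apply_le_of_le {A B : E →L[𝕜] E} (h : A ≤ B) (x : E) :
    RCLike.re ⟪x, A x⟫_𝕜 ≤ RCLike.re ⟪x, B x⟫_𝕜 := by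
  simpa only [sub_apply, inner_sub_right, map_sub, sub_nonneg] using
    ((le_def A B).mp h).re_inner_nonneg_right x

theorem bddAbove_range_re_inner_apply {ι : Type*} {T : ι → E →L[𝕜] E} {B : E →L[𝕜] E}
    (h : ∀ i, T i ≤ B) (x : E) : BddAbove (range fun i => RCLike.re ⟪x, T i x⟫_𝕜) :=
  ⟨_, forall_mem_range.mpr fun i => re_inner_apply_le_of_le (h i) x⟩

theorem le_iff_forall_re_inner_apply_le [CompleteSpace E] {A B : E →L[𝕜] E}
    (hA : IsSelfAdjoint A) (hB : IsSelfAdjoint B) :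
    A ≤ B ↔ ∀ x, RCLike.re ⟪x, A x⟫_𝕜 ≤ RCLike.re ⟪x, B x⟫_𝕜 := by
  refine ⟨re_inner_apply_le_of_le, fun h => (le_def A B).mpr (isPositive_def'.mpr
    ⟨hB.sub hA, fun x => ?_⟩)⟩
  rw [reApplyInnerSelf_apply, inner_re_symm, sub_apply, inner_sub_right, map_sub, sub_nonneg]
  exact h x

theorem isSelfAdjoint_of_tendsto_apply [CompleteSpace E] {ι : Type*} {l : Filter ι} [l.NeBot]
    {T : ι → E →L[𝕜] E} {G : E →L[𝕜] E} (hT : ∀ i, IsSelfAdjoint (T i))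
    (hG : ∀ x, Tendsto (fun i => T i x) l (𝓝 (G x))) : IsSelfAdjoint G := by
  refine isSelfAdjoint_iff_isSymmetric.mpr fun x y => ?_
  have hsymm (i : ι) : ⟪T i x, y⟫_𝕜 = ⟪x, T i y⟫_𝕜 := (hT i).isSymmetric x y
  exact tendsto_nhds_unique ((hG x).inner tendsto_const_nhds)
    ((tendsto_const_nhds.inner (hG y)).congr fun i => (hsymm i).symm)

theorem re_inner_apply_eq_iSup_of_tendsto {ι : Type*} [Preorder ι] [IsDirected ι (· ≤ ·)]
    [Nonempty ι] {T : ι → E →L[𝕜] E} {G : E →L[𝕜] E} (hT : Monotone T) {x : E}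
    (hbdd : BddAbove (range fun i => RCLike.re ⟪x, T i x⟫_𝕜))
    (hG : Tendsto (fun i => T i x) atTop (𝓝 (G x))) :
    RCLike.re ⟪x, G x⟫_𝕜 = ⨆ i, RCLike.re ⟪x, T i x⟫_𝕜 :=
  tendsto_nhds_unique (RCLike.continuous_re.tendsto _ |>.comp (tendsto_const_nhds.inner hG))
    (tendsto_atTop_ciSup (fun _ _ hij => re_inner_apply_le_of_le (hT hij) x) hbdd)

end RCLike

variable {E : Type*} [NormedAddCommGroup E] [InnerProductSpace ℂ E] [CompleteSpace E]

theorem norm_apply_sq_le_opNorm_mul_re_inner {S : E →L[ℂ] E} (hS : 0 ≤ S) (x : E) :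
    ‖S x‖ ^ 2 ≤ ‖S‖ * (⟪x, S x⟫_ℂ).re := by
  set R := CFC.sqrt S
  have hR : IsSelfAdjoint R := .of_nonneg (CFC.sqrt_nonneg S)
  have hRR : R * R = S := CFC.sqrt_mul_sqrt_self S
  have hnormR : ‖R‖ * ‖R‖ = ‖S‖ := by
    rw [← hRR, ← CStarRing.norm_star_mul_self, hR.star_eq]
  have hquad : ‖R x‖ ^ 2 = (⟪x, S x⟫_ℂ).re := by
    rw [← inner_self_eq_norm_sq (𝕜 := ℂ), ← hRR]
    exact congrArg _ (hR.isSymmetric x (R x))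
  calc ‖S x‖ ^ 2 = ‖R (R x)‖ ^ 2 := by rw [← hRR, mul_apply_eq_comp]
    _ ≤ (‖R‖ * ‖R x‖) ^ 2 := by gcongr; exact R.le_opNorm _
    _ = ‖S‖ * (⟪x, S x⟫_ℂ).re := by rw [mul_pow, sq ‖R‖, hnormR, hquad]

theorem norm_apply_sq_le_re_inner {S : E →L[ℂ] E} (h0 : 0 ≤ S) (h1 : S ≤ 1) (x : E) :
    ‖S x‖ ^ 2 ≤ (⟪x, S x⟫_ℂ).re := by
  have hnorm : ‖S‖ ≤ 1 := (CStarAlgebra.norm_le_one_iff_of_nonneg S h0).mpr h1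
  have hre : 0 ≤ (⟪x, S x⟫_ℂ).re := ((nonneg_iff_isPositive S).mp h0).re_inner_nonneg_right x
  nlinarith [norm_apply_sq_le_opNorm_mul_re_inner h0 x]

theorem exists_tendsto_apply_of_monotone {ι : Type*} [Preorder ι] [IsDirected ι (· ≤ ·)]
    [Nonempty ι] {T : ι → E →L[ℂ] E} (hT : Monotone T) (h0 : ∀ i, 0 ≤ T i)
    (h1 : ∀ i, T i ≤ 1) : ∃ G : E →L[ℂ] E, ∀ x, Tendsto (fun i => T i x) atTop (𝓝 (G x)) := by
  have hcauchy (x : E) : CauchySeq fun i => T i x := by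
    refine cauchySeq_of_norm_sub_sq_le (bddAbove_range_re_inner_apply h1 x) fun i j hij => ?_
    have hdiff0 : 0 ≤ T j - T i := sub_nonneg.mpr (hT hij)
    have hdiff1 : T j - T i ≤ 1 := (sub_le_self _ (h0 i)).trans (h1 j)
    simpa only [sub_apply, inner_sub_right, Complex.sub_re, RCLike.re_to_complex] using
      norm_apply_sq_le_re_inner hdiff0 hdiff1 x
  choose g hg using fun x => cauchySeq_tendsto_of_complete (hcauchy x)
  have hbdd : Bornology.IsBounded (range T) := Metric.isBounded_closedBall.subset <|
    forall_mem_range.mpr fun i => mem_closedBall_zero_iff.mpr <|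
      (CStarAlgebra.norm_le_one_iff_of_nonneg _ (h0 i)).mpr (h1 i)
  exact ⟨ofTendstoOfBoundedRange g T (tendsto_pi_nhds.mpr hg) hbdd, hg⟩

end ContinuousLinearMap

/-- A nonempty family of selfadjoint bounded operators `0 ≤ T i ≤ 1` on a complex Hilbert
space which is directed in the Loewner order has a least upper bound `G`, which is a
selfadjoint operator with `0 ≤ G ≤ 1` whose quadratic form is the pointwise supremum of
the quadratic forms of the `T i`. -/
theorem directed_selfadjoint_family_has_lub
    {H : Type*} [NormedAddCommGroup H] [InnerProductSpace ℂ H] [CompleteSpace H]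
    {ι : Type*} [Nonempty ι] (T : ι → H →L[ℂ] H)
    (hsa : ∀ i, IsSelfAdjoint (T i))
    (hpos : ∀ i, 0 ≤ T i) (hle : ∀ i, T i ≤ 1)
    (hdir : ∀ i j : ι, ∃ k : ι, T i ≤ T k ∧ T j ≤ T k) :
    ∃ G : H →L[ℂ] H, IsSelfAdjoint G ∧ 0 ≤ G ∧ G ≤ 1 ∧
      (∀ ψ : H, (inner ℂ ψ (G ψ) : ℂ).re = ⨆ i : ι, (inner ℂ ψ (T i ψ) : ℂ).re) ∧
      (∀ i, T i ≤ G) ∧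
      (∀ G' : H →L[ℂ] H, IsSelfAdjoint G' → (∀ i, T i ≤ G') → G ≤ G') := by
  let : Preorder ι := Preorder.lift T
  have : IsDirected ι (· ≤ ·) := ⟨hdir⟩
  have hmono : Monotone T := fun _ _ h => h
  obtain ⟨G, hG⟩ := exists_tendsto_apply_of_monotone hmono hpos hle
  have hGsa : IsSelfAdjoint G := isSelfAdjoint_of_tendsto_apply hsa hG
  have hquad (ψ : H) : (inner ℂ ψ (G ψ) : ℂ).re = ⨆ i : ι, (inner ℂ ψ (T i ψ) : ℂ).re :=
    re_inner_apply_eq_iSup_of_tendsto hmono (bddAbove_range_re_inner_apply hle ψ) (hG ψ)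
  have hub (i : ι) : T i ≤ G := (le_iff_forall_re_inner_apply_le (hsa i) hGsa).mpr fun ψ =>
    (le_ciSup (bddAbove_range_re_inner_apply hle ψ) i).trans_eq (hquad ψ).symm
  have hleast (G' : H →L[ℂ] H) (hG' : IsSelfAdjoint G') (hub' : ∀ i, T i ≤ G') : G ≤ G' :=
    (le_iff_forall_re_inner_apply_le hGsa hG').mpr fun ψ =>
      (hquad ψ).trans_le (ciSup_le fun i => re_inner_apply_le_of_le (hub' i) ψ)
  obtain ⟨i₀⟩ := ‹Nonempty ι›
  exact ⟨G, hGsa, (hpos i₀).trans (hub i₀), hleast 1 (.one _) hle, hquad, hub, hleast⟩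
end

section
/- Let n be a nonempty finite type, C a quantum program, C† its Hilbert–Schmidt adjoint, and F an effect. Then C†(F) is the weakest precondition of F with respect to C: (i) C†(F) is an effect; (ii) for every density matrix ρ, ((C† F) * ρ).trace = (F * C(ρ)).trace, so in particular Re(((C† F) * ρ).trace) ≤ Re((F * C(ρ)).trace); and (iii) C†(F) is the greatest such predicate: every Hermitian matrix G with G.PosSemidef and Re((G * ρ).trace) ≤ Re((F * C(ρ)).trace) for all density matrices ρ satisfies (C†(F) - G).PosSemidef. Consequently the weakest precondition is unique. -/
/-!
Testing against the rank-one density matrices `x xᴴ / ‖x‖²` identifies the quadratic form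
`xᴴ (C† F) x` with `tr (F · C (x xᴴ))`, which is nonnegative because `F` and `C (x xᴴ)` are
positive; since trace preservation of `C` means `C† 1 = 1`, the same applies to
`1 - C† F = C† (1 - F)`. The same test shows that an inequality between expectations on all
density matrices is a Loewner inequality, which gives maximality of `C† F`; uniqueness is
antisymmetry of the Loewner order.
-/

open scoped ComplexOrder

namespace Matrix

variable {n : Type*} [Fintype n]

lemma trace_mul_vecMulVec_star {R : Type*} [CommSemiring R] [Star R] (M : Matrix n n R)
    (x : n → R) : (M * vecMulVec x (star x)).trace = star x ⬝ᵥ M *ᵥ x := by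
  rw [mul_vecMulVec, trace_vecMulVec, dotProduct_comm]

lemma PosSemidef.trace_mul_nonneg {𝕜 : Type*} [RCLike 𝕜] {A B : Matrix n n 𝕜}
    (hA : A.PosSemidef) (hB : B.PosSemidef) : 0 ≤ (A * B).trace := by
  obtain ⟨m, v, rfl⟩ := posSemidef_iff_eq_sum_vecMulVec.mp hB
  simp only [Matrix.mul_sum, trace_sum, trace_mul_vecMulVec_star]
  exact Finset.sum_nonneg fun i _ => hA.dotProduct_mulVec_nonneg (v i)

lemma posSemidef_iff_forall_dotProduct_mulVec_nonneg {A : Matrix n n ℂ} :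
    A.PosSemidef ↔ ∀ x, 0 ≤ star x ⬝ᵥ A *ᵥ x := by
  classical
  refine ⟨PosSemidef.dotProduct_mulVec_nonneg, fun h => ?_⟩
  rw [← isPositive_toEuclideanLin_iff, LinearMap.isPositive_iff_complex]
  intro x
  have hx := h x.ofLp
  have hz : 0 ≤ inner ℂ (toEuclideanLin A x) x := by
    rw [← star_nonneg_iff, ← inner_conj_symm]
    simpa [EuclideanSpace.inner_eq_star_dotProduct, dotProduct_comm] using hx
  exact ⟨Complex.conj_eq_iff_re.mp (IsSelfAdjoint.of_nonneg hz).star_eq,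
    (Complex.nonneg_iff.mp hz).1⟩

lemma posSemidef_of_forall_density_re_trace_mul_nonneg {A : Matrix n n ℂ} (hA : A.IsHermitian)
    (h : ∀ ρ : Matrix n n ℂ, ρ.PosSemidef → ρ.trace = 1 → 0 ≤ (A * ρ).trace.re) :
    A.PosSemidef := by
  refine .of_dotProduct_mulVec_nonneg hA fun x => ?_
  rcases eq_or_ne x 0 with rfl | hx
  · simp
  set t : ℝ := (star x ⬝ᵥ x).re
  have ht : (t : ℂ) = star x ⬝ᵥ x :=
    Complex.conj_eq_iff_re.mp (IsSelfAdjoint.of_nonneg (dotProduct_star_self_nonneg x)).star_eq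
  have htpos : 0 < t := by exact_mod_cast ht ▸ dotProduct_star_self_pos_iff.mpr hx
  let ρ : Matrix n n ℂ := (t⁻¹ : ℂ) • vecMulVec x (star x)
  have hρ : ρ.PosSemidef :=
    (posSemidef_vecMulVec_self_star x).smul (by exact_mod_cast (inv_pos.mpr htpos).le)
  have hρtr : ρ.trace = 1 := by
    rw [trace_smul, trace_vecMulVec, dotProduct_comm, ← ht, smul_eq_mul]
    exact inv_mul_cancel₀ (by exact_mod_cast htpos.ne')
  have hre : 0 ≤ t⁻¹ * (star x ⬝ᵥ A *ᵥ x).re := by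
    have := h ρ hρ hρtr
    rwa [Matrix.mul_smul, trace_smul, trace_mul_vecMulVec_star, smul_eq_mul,
      ← Complex.ofReal_inv, Complex.re_ofReal_mul] at this
  exact Complex.nonneg_iff.mpr ⟨nonneg_of_mul_nonneg_right hre (inv_pos.mpr htpos),
    (hA.im_star_dotProduct_mulVec_self x).symm⟩

lemma sub_posSemidef_of_forall_density_re_trace_mul_le {A B : Matrix n n ℂ}
    (hA : A.IsHermitian) (hB : B.IsHermitian)
    (h : ∀ ρ : Matrix n n ℂ, ρ.PosSemidef → ρ.trace = 1 →
      (A * ρ).trace.re ≤ (B * ρ).trace.re) :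
    (B - A).PosSemidef :=
  posSemidef_of_forall_density_re_trace_mul_nonneg (hB.sub hA) fun ρ hρ htr => by
    rw [Matrix.sub_mul, trace_sub, Complex.sub_re, sub_nonneg]
    exact h ρ hρ htr

end Matrix

namespace LinearMap

variable {n R : Type*} [Fintype n] [Semiring R]

def IsHilbertSchmidtAdjoint (Cd C : Matrix n n R →ₗ[R] Matrix n n R) : Prop :=
  ∀ F ρ : Matrix n n R, (Cd F * ρ).trace = (F * C ρ).trace

namespace IsHilbertSchmidtAdjoint

theorem map_one [DecidableEq n] {C Cd : Matrix n n R →ₗ[R] Matrix n n R}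
    (hadj : Cd.IsHilbertSchmidtAdjoint C)
    (hCtr : ∀ σ : Matrix n n R, (C σ).trace = σ.trace) : Cd 1 = 1 :=
  Matrix.ext_iff_trace_mul_right.mpr fun ρ => by rw [hadj, Matrix.one_mul, Matrix.one_mul, hCtr]

theorem posSemidef_apply {C Cd : Matrix n n ℂ →ₗ[ℂ] Matrix n n ℂ}
    (hadj : Cd.IsHilbertSchmidtAdjoint C)
    (hCpos : ∀ σ : Matrix n n ℂ, σ.PosSemidef → (C σ).PosSemidef)
    {F : Matrix n n ℂ} (hF : F.PosSemidef) : (Cd F).PosSemidef :=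
  Matrix.posSemidef_iff_forall_dotProduct_mulVec_nonneg.mpr fun x => by
    rw [← Matrix.trace_mul_vecMulVec_star, hadj]
    exact hF.trace_mul_nonneg (hCpos _ (Matrix.posSemidef_vecMulVec_self_star x))

end IsHilbertSchmidtAdjoint

end LinearMap

theorem hs_adjoint_is_weakest_precondition_general
    {n : Type*} [Fintype n] [DecidableEq n]
    (C : Matrix n n ℂ →ₗ[ℂ] Matrix n n ℂ)
    (hCpos : ∀ σ : Matrix n n ℂ, σ.PosSemidef → (C σ).PosSemidef)
    (hCtr : ∀ σ : Matrix n n ℂ, (C σ).trace = σ.trace)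
    (Cd : Matrix n n ℂ →ₗ[ℂ] Matrix n n ℂ)
    (hadj : ∀ F ρ : Matrix n n ℂ, ((Cd F) * ρ).trace = (F * C ρ).trace)
    (F : Matrix n n ℂ) (hF : F.PosSemidef) (hF1 : (1 - F).PosSemidef) :
    ((Cd F).PosSemidef ∧ (1 - Cd F).PosSemidef) ∧
    (∀ ρ : Matrix n n ℂ, ρ.PosSemidef → ρ.trace = 1 →
      ((Cd F) * ρ).trace = (F * C ρ).trace ∧
      (((Cd F) * ρ).trace).re ≤ ((F * C ρ).trace).re) ∧
    (∀ G : Matrix n n ℂ, G.IsHermitian → G.PosSemidef →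
      (∀ ρ : Matrix n n ℂ, ρ.PosSemidef → ρ.trace = 1 →
        ((G * ρ).trace).re ≤ ((F * C ρ).trace).re) →
      (Cd F - G).PosSemidef) ∧
    (∀ W : Matrix n n ℂ, W.IsHermitian → W.PosSemidef →
      (∀ ρ : Matrix n n ℂ, ρ.PosSemidef → ρ.trace = 1 →
        ((W * ρ).trace).re ≤ ((F * C ρ).trace).re) →
      (∀ G : Matrix n n ℂ, G.IsHermitian → G.PosSemidef →
        (∀ ρ : Matrix n n ℂ, ρ.PosSemidef → ρ.trace = 1 →
          ((G * ρ).trace).re ≤ ((F * C ρ).trace).re) →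
        (W - G).PosSemidef) →
      W = Cd F) := by
  replace hadj : Cd.IsHilbertSchmidtAdjoint C := hadj
  have hCdF : (Cd F).PosSemidef := hadj.posSemidef_apply hCpos hF
  have isPrecondition (ρ : Matrix n n ℂ) : ((Cd F * ρ).trace).re ≤ ((F * C ρ).trace).re :=
    (congrArg Complex.re (hadj F ρ)).le
  have greatest (G : Matrix n n ℂ) (hG : G.IsHermitian) (_ : G.PosSemidef)
      (hGF : ∀ ρ : Matrix n n ℂ, ρ.PosSemidef → ρ.trace = 1 →
        ((G * ρ).trace).re ≤ ((F * C ρ).trace).re) : (Cd F - G).PosSemidef :=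
    Matrix.sub_posSemidef_of_forall_density_re_trace_mul_le hG hCdF.isHermitian
      fun ρ hρ htr => (hadj F ρ).symm ▸ hGF ρ hρ htr
  refine ⟨⟨hCdF, ?_⟩, fun ρ _ _ => ⟨hadj F ρ, isPrecondition ρ⟩, greatest, ?_⟩
  · rw [← hadj.map_one hCtr, ← map_sub]
    exact hadj.posSemidef_apply hCpos hF1
  · intro W hW hWpsd hWF hWgreatest
    open scoped MatrixOrder in
    exact le_antisymm (greatest W hW hWpsd hWF)
      (hWgreatest (Cd F) hCdF.isHermitian hCdF fun ρ _ _ => isPrecondition ρ)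

/-- For a quantum program `C` with Hilbert–Schmidt adjoint `C†` and an effect `F`, the
matrix `C†(F)` is the weakest precondition of `F` with respect to `C`: it is an effect,
it satisfies `((C† F) * ρ).trace = (F * C(ρ)).trace` for all density matrices `ρ`, it is
the greatest precondition in the Loewner order, and it is the unique such predicate. -/
theorem hs_adjoint_is_weakest_precondition
    {n : Type*} [Fintype n] [DecidableEq n] [Nonempty n]
    (C : Matrix n n ℂ →ₗ[ℂ] Matrix n n ℂ)
    (hCpos : ∀ σ : Matrix n n ℂ, σ.PosSemidef → (C σ).PosSemidef)
    (hCtr : ∀ σ : Matrix n n ℂ, (C σ).trace = σ.trace)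
    (Cd : Matrix n n ℂ →ₗ[ℂ] Matrix n n ℂ)
    (hadj : ∀ F ρ : Matrix n n ℂ, ((Cd F) * ρ).trace = (F * C ρ).trace)
    (F : Matrix n n ℂ) (hF : F.PosSemidef) (hF1 : (1 - F).PosSemidef) :
    ((Cd F).PosSemidef ∧ (1 - Cd F).PosSemidef) ∧
    (∀ ρ : Matrix n n ℂ, ρ.PosSemidef → ρ.trace = 1 →
      ((Cd F) * ρ).trace = (F * C ρ).trace ∧
      (((Cd F) * ρ).trace).re ≤ ((F * C ρ).trace).re) ∧
    (∀ G : Matrix n n ℂ, G.IsHermitian → G.PosSemidef →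
      (∀ ρ : Matrix n n ℂ, ρ.PosSemidef → ρ.trace = 1 →
        ((G * ρ).trace).re ≤ ((F * C ρ).trace).re) →
      (Cd F - G).PosSemidef) ∧
    (∀ W : Matrix n n ℂ, W.IsHermitian → W.PosSemidef →
      (∀ ρ : Matrix n n ℂ, ρ.PosSemidef → ρ.trace = 1 →
        ((W * ρ).trace).re ≤ ((F * C ρ).trace).re) →
      (∀ G : Matrix n n ℂ, G.IsHermitian → G.PosSemidef →
        (∀ ρ : Matrix n n ℂ, ρ.PosSemidef → ρ.trace = 1 →
          ((G * ρ).trace).re ≤ ((F * C ρ).trace).re) →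
        (W - G).PosSemidef) →
      W = Cd F) :=
  hs_adjoint_is_weakest_precondition_general C hCpos hCtr Cd hadj F hF hF1
end

section
/- (D'Hondt–Panangaden special case.) Let n be a nonempty finite type, s a finite index set, and (E i)_{i ∈ s} matrices in Matrix n n ℂ with ∑_{i ∈ s} (E i)ᴴ * (E i) = 1. Define the quantum program C(ρ) = ∑_{i ∈ s} (E i) * ρ * (E i)ᴴ. Let M be an effect and set wp(M) = ∑_{i ∈ s} (E i)ᴴ * M * (E i). Then: (i) wp(M) is an effect; (ii) for every density matrix ρ, (wp(M) * ρ).trace = (M * C(ρ)).trace; and (iii) wp(M) is the greatest matrix with this precondition property: every Hermitian positive semidefinite G with Re((G * ρ).trace) ≤ Re((M * C(ρ)).trace) for all density matrices ρ satisfies (wp(M) - G).PosSemidef. -/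
/-!
The map `M ↦ ∑ (E i)ᴴ M (E i)` is the adjoint of the Kraus map `ρ ↦ ∑ E i ρ (E i)ᴴ` for the
trace pairing (cyclicity of the trace), and it preserves positivity; since it sends `1` to `1`,
it also sends `1 - M` to `1 - wp(M)`, so effects go to effects. Maximality: `wp(M) - G` has
nonnegative expectation in every density matrix, and its expectation in the pure state
`x xᴴ / xᴴ x` is its quadratic form at `x` up to a positive factor.
-/

open scoped ComplexOrder Matrix

namespace Matrix

variable {n ι R : Type*} [Fintype n]

theorem posSemidef_sum_conjTranspose_mul_mul [CommRing R] [PartialOrder R] [StarRing R]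
    [StarOrderedRing R] {A : Matrix n n R} (hA : A.PosSemidef) (s : Finset ι)
    (E : ι → Matrix n n R) : (∑ i ∈ s, (E i)ᴴ * A * E i).PosSemidef :=
  posSemidef_sum s fun i _ => hA.conjTranspose_mul_mul_same (E i)

theorem one_sub_sum_conjTranspose_mul_mul [DecidableEq n] [Ring R] [StarRing R] {s : Finset ι}
    {E : ι → Matrix n n R} (hE : ∑ i ∈ s, (E i)ᴴ * E i = 1) (A : Matrix n n R) :
    1 - ∑ i ∈ s, (E i)ᴴ * A * E i = ∑ i ∈ s, (E i)ᴴ * (1 - A) * E i := by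
  simp only [Matrix.mul_sub, Matrix.sub_mul, Matrix.mul_one, Finset.sum_sub_distrib, hE]

theorem trace_sum_conjTranspose_mul_mul_mul [CommSemiring R] [StarRing R] (s : Finset ι)
    (E : ι → Matrix n n R) (A ρ : Matrix n n R) :
    ((∑ i ∈ s, (E i)ᴴ * A * E i) * ρ).trace = (A * ∑ i ∈ s, E i * ρ * (E i)ᴴ).trace := by
  simp only [Finset.sum_mul, Matrix.mul_sum, trace_sum, Matrix.mul_assoc]
  exact Finset.sum_congr rfl fun i _ => by rw [trace_mul_comm]; simp only [Matrix.mul_assoc]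

/-- A density matrix for `x ≠ 0`; the junk value at `x = 0` is `0`. -/
noncomputable def pureState (x : n → ℂ) : Matrix n n ℂ :=
  (star x ⬝ᵥ x)⁻¹ • vecMulVec x (star x)

theorem posSemidef_pureState (x : n → ℂ) : (pureState x).PosSemidef :=
  (posSemidef_vecMulVec_self_star x).smul (inv_nonneg.mpr (dotProduct_star_self_nonneg x))

theorem trace_pureState {x : n → ℂ} (hx : x ≠ 0) : (pureState x).trace = 1 := by
  rw [pureState, trace_smul, trace_vecMulVec, dotProduct_comm x, smul_eq_mul,
    inv_mul_cancel₀ (dotProduct_star_self_pos_iff.mpr hx).ne']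

theorem trace_mul_pureState (A : Matrix n n ℂ) (x : n → ℂ) :
    (A * pureState x).trace = (star x ⬝ᵥ x)⁻¹ * (star x ⬝ᵥ (A *ᵥ x)) := by
  rw [pureState, Matrix.mul_smul, trace_smul, mul_vecMulVec, trace_vecMulVec,
    dotProduct_comm (A *ᵥ x), smul_eq_mul]

theorem posSemidef_of_re_trace_mul_nonneg {H : Matrix n n ℂ} (hH : H.IsHermitian)
    (h : ∀ ρ : Matrix n n ℂ, ρ.PosSemidef → ρ.trace = 1 → 0 ≤ (H * ρ).trace.re) :
    H.PosSemidef := by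
  refine posSemidef_iff_dotProduct_mulVec.mpr ⟨hH, fun x => ?_⟩
  obtain rfl | hx := eq_or_ne x 0
  · simp
  obtain ⟨c, hc, hcx⟩ : ∃ c : ℝ, 0 < c ∧ (c : ℂ) = star x ⬝ᵥ x :=
    RCLike.pos_iff_exists_ofReal.mp (dotProduct_star_self_pos_iff.mpr hx)
  have hre := h _ (posSemidef_pureState x) (trace_pureState hx)
  rw [trace_mul_pureState, ← hcx, ← Complex.ofReal_inv, Complex.re_ofReal_mul] at hre
  exact Complex.nonneg_iff.mpr ⟨(mul_nonneg_iff_of_pos_left (inv_pos.mpr hc)).mp hre,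
    (hH.im_star_dotProduct_mulVec_self x).symm⟩

end Matrix

open Matrix in
theorem kraus_weakest_precondition_general
    {n : Type*} [Fintype n] [DecidableEq n]
    {ι : Type*} (s : Finset ι) (E : ι → Matrix n n ℂ)
    (hE : ∑ i ∈ s, (E i)ᴴ * E i = 1)
    (M : Matrix n n ℂ) (hM : M.PosSemidef) (hM1 : (1 - M).PosSemidef) :
    ((∑ i ∈ s, (E i)ᴴ * M * E i).PosSemidef ∧
      (1 - ∑ i ∈ s, (E i)ᴴ * M * E i).PosSemidef) ∧
    (∀ ρ : Matrix n n ℂ, ρ.PosSemidef → ρ.trace = 1 →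
      ((∑ i ∈ s, (E i)ᴴ * M * E i) * ρ).trace
        = (M * ∑ i ∈ s, E i * ρ * (E i)ᴴ).trace) ∧
    (∀ G : Matrix n n ℂ, G.IsHermitian → G.PosSemidef →
      (∀ ρ : Matrix n n ℂ, ρ.PosSemidef → ρ.trace = 1 →
        ((G * ρ).trace).re ≤ ((M * ∑ i ∈ s, E i * ρ * (E i)ᴴ).trace).re) →
      ((∑ i ∈ s, (E i)ᴴ * M * E i) - G).PosSemidef) := by
  have hW := posSemidef_sum_conjTranspose_mul_mul hM s E
  have hdual := trace_sum_conjTranspose_mul_mul_mul s E M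
  refine ⟨⟨hW, ?_⟩, fun ρ _ _ => hdual ρ, fun G hG _ hle => ?_⟩
  · rw [one_sub_sum_conjTranspose_mul_mul hE]
    exact posSemidef_sum_conjTranspose_mul_mul hM1 s E
  · refine posSemidef_of_re_trace_mul_nonneg (hW.isHermitian.sub hG) fun ρ hρ hρ1 => ?_
    rw [Matrix.sub_mul, trace_sub, Complex.sub_re, hdual, sub_nonneg]
    exact hle ρ hρ hρ1

/-- D'Hondt–Panangaden special case: for a quantum program in Kraus form
`C(ρ) = ∑ i ∈ s, E i * ρ * (E i)ᴴ` with `∑ i ∈ s, (E i)ᴴ * E i = 1`, and an effect `M`,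
the matrix `wp(M) = ∑ i ∈ s, (E i)ᴴ * M * E i` is the weakest precondition of `M`:
it is an effect, its satisfiability in any state equals that of `M` after the program,
and it is the greatest such predicate in the Loewner order. -/
theorem kraus_weakest_precondition
    {n : Type*} [Fintype n] [DecidableEq n] [Nonempty n]
    {ι : Type*} (s : Finset ι) (E : ι → Matrix n n ℂ)
    (hE : ∑ i ∈ s, (E i)ᴴ * E i = 1)
    (M : Matrix n n ℂ) (hM : M.PosSemidef) (hM1 : (1 - M).PosSemidef) :
    ((∑ i ∈ s, (E i)ᴴ * M * E i).PosSemidef ∧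
      (1 - ∑ i ∈ s, (E i)ᴴ * M * E i).PosSemidef) ∧
    (∀ ρ : Matrix n n ℂ, ρ.PosSemidef → ρ.trace = 1 →
      ((∑ i ∈ s, (E i)ᴴ * M * E i) * ρ).trace
        = (M * ∑ i ∈ s, E i * ρ * (E i)ᴴ).trace) ∧
    (∀ G : Matrix n n ℂ, G.IsHermitian → G.PosSemidef →
      (∀ ρ : Matrix n n ℂ, ρ.PosSemidef → ρ.trace = 1 →
        ((G * ρ).trace).re ≤ ((M * ∑ i ∈ s, E i * ρ * (E i)ᴴ).trace).re) →
      ((∑ i ∈ s, (E i)ᴴ * M * E i) - G).PosSemidef) :=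
  kraus_weakest_precondition_general s E hE M hM hM1
end
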